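/- Let β = e_1 (the highest short root of BC_n) and let s_β x = (−x_1, x_2, …, x_n). Then for every continuously differentiable f : ℝ^n → ℂ, every ξ ∈ ℝ^n and every regular x ∈ ℝ^n: e^{x_1} [ (D_{s_β ξ} f)(s_β x) + ξ_1 f(s_β x) ] − (D_ξ g)(x) = −k_1 ξ_1 f(x), where g(y) := e^{y_1} f(s_β y) and D denotes the Cherednik operator associated with (BC_n^+, (k_1,k_2,k_3)). -/

import Mathlib

open scoped BigOperators
open Finset

/-- Sign change of the `i`-th coordinate: the reflection `s_{e_i} = s_{2e_i}`. -/
def negCoord {n : ℕ} (i : Fin n) (x : Fin n → ℝ) : Fin n → ℝ :=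
  fun l => if l = i then -x l else x l

/-- Transposition of the coordinates `i` and `j`: the reflection `s_{e_i − e_j}`. -/
def swapCoord {n : ℕ} (i j : Fin n) (x : Fin n → ℝ) : Fin n → ℝ :=
  fun l => if l = i then x j else if l = j then x i else x l

/-- Swap and negate the coordinates `i` and `j`: the reflection `s_{e_i + e_j}`. -/
def swapNegCoord {n : ℕ} (i j : Fin n) (x : Fin n → ℝ) : Fin n → ℝ :=
  fun l => if l = i then -x j else if l = j then -x i else x l

/-- The Weyl vector `ρ^{BC}(k₁,k₂,k₃)`, with `ρ^{BC} = (1/2)∑ᵢ (k₁+2k₂+2k₃(n−i)) eᵢ`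
(1-based `i`). -/
noncomputable def rhoBC {n : ℕ} (k1 k2 k3 : ℝ) : Fin n → ℝ :=
  fun i => (k1 + 2 * k2 + 2 * k3 * ((n : ℝ) - (i : ℕ) - 1)) / 2

/-- Regular points for the root system `BC_n`. -/
def IsRegularBC {n : ℕ} (x : Fin n → ℝ) : Prop :=
  (∀ i, x i ≠ 0) ∧ ∀ i j : Fin n, i < j → x i + x j ≠ 0 ∧ x i - x j ≠ 0

/-- The Cherednik operator `D_ξ` associated with `(BC_n^+, (k₁,k₂,k₃))`, applied
pointwise: the sum over `BC_n^+` is written out according to the type of root. -/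
noncomputable def cherednikBC {n : ℕ} (k1 k2 k3 : ℝ) (ξ : Fin n → ℝ)
    (f : (Fin n → ℝ) → ℂ) (x : Fin n → ℝ) : ℂ :=
  fderiv ℝ f x ξ - ((∑ i, rhoBC k1 k2 k3 i * ξ i : ℝ) : ℂ) * f x
    + ∑ i, ((k1 * ξ i : ℝ) : ℂ) * (f x - f (negCoord i x))
        / (1 - Complex.exp (-((x i : ℝ) : ℂ)))
    + ∑ i, ((k2 * (2 * ξ i) : ℝ) : ℂ) * (f x - f (negCoord i x))
        / (1 - Complex.exp (-((2 * x i : ℝ) : ℂ)))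
    + ∑ i, ∑ j, (if i < j then
        ((k3 * (ξ i - ξ j) : ℝ) : ℂ) * (f x - f (swapCoord i j x))
          / (1 - Complex.exp (-((x i - x j : ℝ) : ℂ)))
        + ((k3 * (ξ i + ξ j) : ℝ) : ℂ) * (f x - f (swapNegCoord i j x))
          / (1 - Complex.exp (-((x i + x j : ℝ) : ℂ)))
      else 0)

/-! ### Auxiliary lemmas -/

lemma one_sub_cexp_ne_zero {r : ℝ} (hr : r ≠ 0) : (1:ℂ) - Complex.exp (r:ℂ) ≠ 0 := by
  rw [sub_ne_zero, ← Complex.ofReal_exp]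
  exact fun h => hr ((Real.exp_eq_one_iff _).mp (Complex.ofReal_eq_one.mp h.symm))

noncomputable def negCoordL {n : ℕ} (i0 : Fin n) : (Fin n → ℝ) →L[ℝ] (Fin n → ℝ) :=
  ContinuousLinearMap.pi fun l => (if l = i0 then (-1:ℝ) else 1) • ContinuousLinearMap.proj l

lemma negCoordL_apply {n : ℕ} (i0 : Fin n) (x : Fin n → ℝ) :
    negCoordL i0 x = negCoord i0 x := by
  funext l
  simp [negCoordL, negCoord]
  split_ifs <;> simp

lemma fderiv_g {n : ℕ} (i0 : Fin n) (f : (Fin n → ℝ) → ℂ) (hf : ContDiff ℝ 1 f)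
    (x ξ : Fin n → ℝ) :
    fderiv ℝ (fun y => Complex.exp ((y i0 : ℝ) : ℂ) * f (negCoord i0 y)) x ξ
      = (ξ i0 : ℂ) * Complex.exp ((x i0 : ℝ):ℂ) * f (negCoord i0 x)
        + Complex.exp ((x i0 : ℝ):ℂ) * fderiv ℝ f (negCoord i0 x) (negCoord i0 ξ) := by
  set ℓ : (Fin n → ℝ) →L[ℝ] ℂ :=
    Complex.ofRealCLM.comp (ContinuousLinearMap.proj (R := ℝ) (φ := fun _ : Fin n => ℝ) i0)
    with hℓdef
  have hℓ : HasFDerivAt (fun y : Fin n → ℝ => ((y i0 : ℝ) : ℂ)) ℓ x := ℓ.hasFDerivAt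
  have h1 : HasFDerivAt (fun y : Fin n → ℝ => Complex.exp ((y i0 : ℝ) : ℂ))
      (Complex.exp ((x i0 : ℝ):ℂ) • ℓ) x :=
    (Complex.hasDerivAt_exp _).comp_hasFDerivAt x hℓ
  have h2 : HasFDerivAt (fun y => f (negCoord i0 y))
      ((fderiv ℝ f (negCoord i0 x)).comp (negCoordL i0)) x := by
    have := ((hf.differentiable one_ne_zero (negCoordL i0 x)).hasFDerivAt).comp x
      (negCoordL i0).hasFDerivAt
    have h' : (fun y => f (negCoord i0 y)) = f ∘ ⇑(negCoordL i0) := by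
      funext y; simp [Function.comp, negCoordL_apply]
    rw [h']
    simpa [negCoordL_apply] using this
  have h : fderiv ℝ (fun y => Complex.exp ((y i0 : ℝ) : ℂ) * f (negCoord i0 y)) x = _ :=
    (h1.mul h2).fderiv
  rw [h]
  simp [hℓdef, ContinuousLinearMap.add_apply, ContinuousLinearMap.smul_apply,
    ContinuousLinearMap.comp_apply, negCoordL_apply]
  ring

lemma keyA (c E u v : ℂ) (hE : E ≠ 0) (h1 : 1 - E ≠ 0) (h2 : 1 - E⁻¹ ≠ 0) :
    E * ((-c) * (u - v) / (1 - E)) - c * (E * u - E⁻¹ * v) / (1 - E⁻¹)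
      = -c * (E * u + v) := by
  have h1' : -1 + E ≠ 0 := fun h => h1 (by linear_combination -h)
  have h2' : E - 1 ≠ 0 := fun h => h1 (by linear_combination -h)
  field_simp
  ring

lemma keyB (c E u v : ℂ) (hE : E ≠ 0) (h1 : 1 - E * E ≠ 0) (h2 : 1 - E⁻¹ * E⁻¹ ≠ 0) :
    E * ((-c) * (u - v) / (1 - E * E)) - c * (E * u - E⁻¹ * v) / (1 - E⁻¹ * E⁻¹)
      = -c * (E * u) := by
  have h1' : -1 + E * E ≠ 0 := fun h => h1 (by linear_combination -h)
  have h1'' : -1 + E ^ 2 ≠ 0 := fun h => h1 (by linear_combination -h)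
  have h1''' : E ^ 2 - 1 ≠ 0 := fun h => h1 (by linear_combination -h)
  have hX : -E + E ^ 3 ≠ 0 := fun h => (mul_ne_zero hE h1''') (by linear_combination h)
  have hInv : (-E + E ^ 3) * (-E + E ^ 3)⁻¹ = 1 := mul_inv_cancel₀ hX
  rw [mul_div_assoc', div_sub_div _ _ h1 h2, div_eq_iff (mul_ne_zero h1 h2)]
  field_simp
  ring

lemma keyC (c d E F u wp wm : ℂ) (hE : E ≠ 0) (hF : F ≠ 0)
    (h1 : 1 - E * F ≠ 0) (h2 : 1 - E * F⁻¹ ≠ 0) (h3 : 1 - E⁻¹ * F ≠ 0)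
    (h4 : 1 - (E * F)⁻¹ ≠ 0) :
    E * ((-d) * (u - wp) / (1 - E * F) + (-c) * (u - wm) / (1 - E * F⁻¹))
      - (c * (E * u - F * wm) / (1 - E⁻¹ * F) + d * (E * u - F⁻¹ * wp) / (1 - (E * F)⁻¹))
      = -(c + d) * (E * u) := by
  have h1' : -1 + E * F ≠ 0 := fun h => h1 (by linear_combination -h)
  have h2' : F - E ≠ 0 := by
    intro h; apply h2; rw [sub_eq_zero] at h; field_simp [← h]; simp [h]
  have h3' : E - F ≠ 0 := by
    intro h; apply h3; rw [sub_eq_zero] at h; field_simp [h]; simp [h]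
  have h2'' : -F + E ≠ 0 := fun h => h3' (by linear_combination h)
  have h3'' : -E + F ≠ 0 := fun h => h2' (by linear_combination h)
  have h4' : E * F - 1 ≠ 0 := fun h => h1 (by linear_combination -h)
  field_simp
  ring

lemma keyAexp (K ξ0 s : ℝ) (hs : s ≠ 0) (u v : ℂ) :
    Complex.exp ((s:ℝ):ℂ) * (((K * -ξ0 : ℝ):ℂ) * (u - v) / (1 - Complex.exp (-((-s : ℝ):ℂ))))
      - ((K * ξ0 : ℝ):ℂ) * (Complex.exp ((s:ℝ):ℂ) * u - Complex.exp ((-s : ℝ):ℂ) * v) /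
          (1 - Complex.exp (-((s : ℝ):ℂ)))
      = -((K:ℂ) * ((ξ0:ℝ):ℂ)) * (Complex.exp ((s:ℝ):ℂ) * u + v) := by
  have hE := Complex.exp_ne_zero ((s:ℝ):ℂ)
  have h1 : (1:ℂ) - Complex.exp ((s:ℝ):ℂ) ≠ 0 := one_sub_cexp_ne_zero hs
  have h2 : (1:ℂ) - (Complex.exp ((s:ℝ):ℂ))⁻¹ ≠ 0 := by
    rw [← Complex.exp_neg, ← Complex.ofReal_neg]
    exact one_sub_cexp_ne_zero (neg_ne_zero.mpr hs)
  push_cast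
  rw [neg_neg, Complex.exp_neg]
  linear_combination keyA ((K:ℂ) * (ξ0:ℂ)) (Complex.exp ((s:ℝ):ℂ)) u v hE h1 h2

lemma keyBexp (K ξ0 s : ℝ) (hs : s ≠ 0) (u v : ℂ) :
    Complex.exp ((s:ℝ):ℂ) *
        (((K * (2 * -ξ0) : ℝ):ℂ) * (u - v) / (1 - Complex.exp (-((2 * -s : ℝ):ℂ))))
      - ((K * (2 * ξ0) : ℝ):ℂ) * (Complex.exp ((s:ℝ):ℂ) * u - Complex.exp ((-s : ℝ):ℂ) * v) /
          (1 - Complex.exp (-((2 * s : ℝ):ℂ)))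
      = -((K:ℂ) * (2 * ((ξ0:ℝ):ℂ))) * (Complex.exp ((s:ℝ):ℂ) * u) := by
  have hE := Complex.exp_ne_zero ((s:ℝ):ℂ)
  have h1 : (1:ℂ) - Complex.exp ((s:ℝ):ℂ) * Complex.exp ((s:ℝ):ℂ) ≠ 0 := by
    have := one_sub_cexp_ne_zero (mul_ne_zero (two_ne_zero (α := ℝ)) hs)
    rwa [Complex.ofReal_mul, Complex.ofReal_ofNat, two_mul, Complex.exp_add] at this
  have h2 : (1:ℂ) - (Complex.exp ((s:ℝ):ℂ))⁻¹ * (Complex.exp ((s:ℝ):ℂ))⁻¹ ≠ 0 := by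
    have := one_sub_cexp_ne_zero
      (neg_ne_zero.mpr (mul_ne_zero (two_ne_zero (α := ℝ)) hs))
    rwa [Complex.ofReal_neg, Complex.ofReal_mul, Complex.ofReal_ofNat, two_mul, neg_add,
      Complex.exp_add, Complex.exp_neg] at this
  push_cast
  rw [show -(2 * -(s:ℂ)) = (s:ℂ) + (s:ℂ) by ring,
    show -(2 * (s:ℂ)) = -(s:ℂ) + -(s:ℂ) by ring,
    Complex.exp_add, Complex.exp_add, Complex.exp_neg]
  linear_combination keyB ((K:ℂ) * (2 * (ξ0:ℂ))) (Complex.exp ((s:ℝ):ℂ)) u v hE h1 h2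

lemma keyCexp (K ξ0 ξj s t : ℝ) (hst : s + t ≠ 0) (hd : s - t ≠ 0) (u wp wm : ℂ) :
    Complex.exp ((s:ℝ):ℂ) *
        (((K * (-ξ0 - ξj) : ℝ):ℂ) * (u - wp) / (1 - Complex.exp (-((-s - t : ℝ):ℂ)))
          + ((K * (-ξ0 + ξj) : ℝ):ℂ) * (u - wm) / (1 - Complex.exp (-((-s + t : ℝ):ℂ))))
      - (((K * (ξ0 - ξj) : ℝ):ℂ) *
            (Complex.exp ((s:ℝ):ℂ) * u - Complex.exp ((t:ℝ):ℂ) * wm) /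
            (1 - Complex.exp (-((s - t : ℝ):ℂ)))
          + ((K * (ξ0 + ξj) : ℝ):ℂ) *
            (Complex.exp ((s:ℝ):ℂ) * u - Complex.exp ((-t : ℝ):ℂ) * wp) /
            (1 - Complex.exp (-((s + t : ℝ):ℂ))))
      = -(2 * (K:ℂ) * ((ξ0:ℝ):ℂ)) * (Complex.exp ((s:ℝ):ℂ) * u) := by
  have hE := Complex.exp_ne_zero ((s:ℝ):ℂ)
  have hF := Complex.exp_ne_zero ((t:ℝ):ℂ)
  have H1 : (1:ℂ) - Complex.exp ((s:ℝ):ℂ) * Complex.exp ((t:ℝ):ℂ) ≠ 0 := by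
    have := one_sub_cexp_ne_zero hst
    rwa [Complex.ofReal_add, Complex.exp_add] at this
  have H2 : (1:ℂ) - Complex.exp ((s:ℝ):ℂ) * (Complex.exp ((t:ℝ):ℂ))⁻¹ ≠ 0 := by
    have := one_sub_cexp_ne_zero hd
    rwa [Complex.ofReal_sub, Complex.exp_sub, div_eq_mul_inv] at this
  have H3 : (1:ℂ) - (Complex.exp ((s:ℝ):ℂ))⁻¹ * Complex.exp ((t:ℝ):ℂ) ≠ 0 := by
    have h := one_sub_cexp_ne_zero (show t - s ≠ 0 from fun h => hd (by linarith))
    rw [Complex.ofReal_sub, Complex.exp_sub, div_eq_mul_inv] at h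
    intro H; exact h (by linear_combination H)
  have H4 : (1:ℂ) - (Complex.exp ((s:ℝ):ℂ) * Complex.exp ((t:ℝ):ℂ))⁻¹ ≠ 0 := by
    have := one_sub_cexp_ne_zero (neg_ne_zero.mpr hst)
    rwa [Complex.ofReal_neg, Complex.ofReal_add, Complex.exp_neg, Complex.exp_add] at this
  push_cast
  rw [show -(-(s:ℂ) - (t:ℂ)) = (s:ℂ) + (t:ℂ) by ring,
    show -(-(s:ℂ) + (t:ℂ)) = (s:ℂ) + -(t:ℂ) by ring,
    show -((s:ℂ) - (t:ℂ)) = -(s:ℂ) + (t:ℂ) by ring,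
    show -((s:ℂ) + (t:ℂ)) = -(s:ℂ) + -(t:ℂ) by ring]
  simp only [Complex.exp_add, Complex.exp_neg]
  rw [← mul_inv]
  linear_combination keyC ((K:ℂ) * ((ξ0:ℂ) - (ξj:ℂ))) ((K:ℂ) * ((ξ0:ℂ) + (ξj:ℂ)))
    (Complex.exp ((s:ℝ):ℂ)) (Complex.exp ((t:ℝ):ℂ)) u wp wm hE hF H1 H2 H3 H4

/-! ### Reflection bookkeeping -/

section Refl
variable {n : ℕ}

lemma negCoord_self (i : Fin n) (x : Fin n → ℝ) : negCoord i x i = -x i := if_pos rfl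

lemma negCoord_ne {i l : Fin n} (x : Fin n → ℝ) (h : l ≠ i) : negCoord i x l = x l := if_neg h

lemma negCoord_invol (i : Fin n) (x : Fin n → ℝ) : negCoord i (negCoord i x) = x := by
  funext l; simp only [negCoord]; split_ifs <;> simp_all

lemma negCoord_comm (i m : Fin n) (x : Fin n → ℝ) :
    negCoord i (negCoord m x) = negCoord m (negCoord i x) := by
  funext l; simp only [negCoord]; split_ifs <;> simp_all

lemma swapCoord_negCoord {i j : Fin n} (h : j ≠ i) (x : Fin n → ℝ) :
    swapCoord i j (negCoord i x) = negCoord i (swapNegCoord i j x) := by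
  funext l; simp only [negCoord, swapCoord, swapNegCoord]; split_ifs <;> simp_all

lemma swapNegCoord_negCoord {i j : Fin n} (h : j ≠ i) (x : Fin n → ℝ) :
    swapNegCoord i j (negCoord i x) = negCoord i (swapCoord i j x) := by
  funext l; simp only [negCoord, swapCoord, swapNegCoord]; split_ifs <;> simp_all

lemma swapCoord_negCoord_comm {i j m : Fin n} (hi : i ≠ m) (hj : j ≠ m) (x : Fin n → ℝ) :
    swapCoord i j (negCoord m x) = negCoord m (swapCoord i j x) := by
  funext l; simp only [negCoord, swapCoord]; split_ifs <;> simp_all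

lemma swapNegCoord_negCoord_comm {i j m : Fin n} (hi : i ≠ m) (hj : j ≠ m) (x : Fin n → ℝ) :
    swapNegCoord i j (negCoord m x) = negCoord m (swapNegCoord i j x) := by
  funext l; simp only [negCoord, swapNegCoord]; split_ifs <;> simp_all

lemma swapCoord_fst (i j : Fin n) (x : Fin n → ℝ) : swapCoord i j x i = x j := if_pos rfl

lemma swapNegCoord_fst (i j : Fin n) (x : Fin n → ℝ) : swapNegCoord i j x i = -x j := if_pos rfl

lemma swapCoord_ne {i j l : Fin n} (x : Fin n → ℝ) (h1 : l ≠ i) (h2 : l ≠ j) :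
    swapCoord i j x l = x l := by
  simp only [swapCoord, if_neg h1, if_neg h2]

lemma swapNegCoord_ne {i j l : Fin n} (x : Fin n → ℝ) (h1 : l ≠ i) (h2 : l ≠ j) :
    swapNegCoord i j x l = x l := by
  simp only [swapNegCoord, if_neg h1, if_neg h2]

end Refl

set_option maxHeartbeats 2000000 in
/-- Sahi's affine recurrence relation for the Cherednik operator of
type `BC_n` at the highest short root `β = e₁`:
`e^{x₁}[(D_{s_β ξ} f)(s_β x) + ξ₁ f(s_β x)] − (D_ξ g)(x) = −k₁ ξ₁ f(x)`,
where `g(y) = e^{y₁} f(s_β y)`. -/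
theorem cherednikBC_affine_relation
    {n : ℕ} (hn : 0 < n) (k1 k2 k3 : ℝ)
    (hk1 : 0 ≤ k1) (hk2 : 0 ≤ k2) (hk3 : 0 ≤ k3)
    (f : (Fin n → ℝ) → ℂ) (hf : ContDiff ℝ 1 f)
    (ξ x : Fin n → ℝ) (hx : IsRegularBC x) :
    Complex.exp ((x ⟨0, hn⟩ : ℝ) : ℂ)
        * (cherednikBC k1 k2 k3 (negCoord ⟨0, hn⟩ ξ) f (negCoord ⟨0, hn⟩ x)
            + ((ξ ⟨0, hn⟩ : ℝ) : ℂ) * f (negCoord ⟨0, hn⟩ x))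
      - cherednikBC k1 k2 k3 ξ
          (fun y => Complex.exp ((y ⟨0, hn⟩ : ℝ) : ℂ) * f (negCoord ⟨0, hn⟩ y)) x
      = -((k1 : ℂ) * ((ξ ⟨0, hn⟩ : ℝ) : ℂ)) * f x := by
  obtain ⟨hreg, hpairs⟩ := hx
  set i0 : Fin n := ⟨0, hn⟩ with hi0
  have hi0lt : ∀ j : Fin n, j ≠ i0 → i0 < j := by
    intro j hj
    have hv : (j : ℕ) ≠ 0 := by
      intro h; exact hj (Fin.ext (by simp [hi0, h]))
    simp only [Fin.lt_def, hi0]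
    omega
  have hnlt : ∀ i : Fin n, ¬ i < i0 := by
    intro i
    simp only [Fin.lt_def, hi0]
    omega
  -- the ρ-sum identity
  have hrhoR : (∑ i : Fin n, rhoBC (n := n) k1 k2 k3 i * negCoord i0 ξ i)
      = (∑ i : Fin n, rhoBC (n := n) k1 k2 k3 i * ξ i)
        - (k1 + 2*k2 + 2*k3*((n:ℝ)-1)) * ξ i0 := by
    have hterm : ∀ i : Fin n, rhoBC (n := n) k1 k2 k3 i * negCoord i0 ξ i
        = rhoBC (n := n) k1 k2 k3 i * ξ i
          - (if i = i0 then (k1 + 2*k2 + 2*k3*((n:ℝ)-1)) * ξ i0 else 0) := by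
      intro i
      by_cases h : i = i0
      · subst h
        rw [if_pos rfl, negCoord_self]
        simp only [rhoBC, hi0]
        norm_num
        ring
      · rw [if_neg h, negCoord_ne ξ h, sub_zero]
    rw [Finset.sum_congr rfl (fun i _ => hterm i), Finset.sum_sub_distrib]
    congr 1
    simp
  have hrhoC : ((∑ i : Fin n, rhoBC (n := n) k1 k2 k3 i * negCoord i0 ξ i : ℝ) : ℂ)
      = ((∑ i : Fin n, rhoBC (n := n) k1 k2 k3 i * ξ i : ℝ) : ℂ)
        - ((k1:ℂ) + 2*(k2:ℂ) + 2*(k3:ℂ)*((n:ℂ)-1)) * ((ξ i0 : ℝ):ℂ) := by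
    rw [hrhoR]; push_cast; ring
  -- the k₁-sum identity
  have hC1 : Complex.exp ((x i0 : ℝ):ℂ) *
        (∑ i : Fin n, ((k1 * negCoord i0 ξ i : ℝ):ℂ)
            * (f (negCoord i0 x) - f (negCoord i (negCoord i0 x)))
            / (1 - Complex.exp (-((negCoord i0 x i : ℝ):ℂ))))
      - ∑ i : Fin n, ((k1 * ξ i : ℝ):ℂ) *
            (Complex.exp ((x i0 : ℝ):ℂ) * f (negCoord i0 x)
              - Complex.exp ((negCoord i x i0 : ℝ):ℂ) * f (negCoord i0 (negCoord i x)))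
            / (1 - Complex.exp (-((x i : ℝ):ℂ)))
      = -((k1:ℂ) * ((ξ i0 : ℝ):ℂ))
          * (Complex.exp ((x i0 : ℝ):ℂ) * f (negCoord i0 x) + f x) := by
    rw [Finset.mul_sum, ← Finset.sum_sub_distrib, Finset.sum_eq_single i0]
    · simp only [negCoord_self, negCoord_invol]
      exact keyAexp k1 (ξ i0) (x i0) (hreg i0) (f (negCoord i0 x)) (f x)
    · intro i _ hi
      simp only [negCoord_ne ξ hi, negCoord_ne x hi, negCoord_comm i i0 x,
        negCoord_ne x (Ne.symm hi)]
      ring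
    · intro h; exact absurd (Finset.mem_univ i0) h
  -- the k₂-sum identity
  have hC2 : Complex.exp ((x i0 : ℝ):ℂ) *
        (∑ i : Fin n, ((k2 * (2 * negCoord i0 ξ i) : ℝ):ℂ)
            * (f (negCoord i0 x) - f (negCoord i (negCoord i0 x)))
            / (1 - Complex.exp (-((2 * negCoord i0 x i : ℝ):ℂ))))
      - ∑ i : Fin n, ((k2 * (2 * ξ i) : ℝ):ℂ) *
            (Complex.exp ((x i0 : ℝ):ℂ) * f (negCoord i0 x)
              - Complex.exp ((negCoord i x i0 : ℝ):ℂ) * f (negCoord i0 (negCoord i x)))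
            / (1 - Complex.exp (-((2 * x i : ℝ):ℂ)))
      = -((k2:ℂ) * (2 * ((ξ i0 : ℝ):ℂ)))
          * (Complex.exp ((x i0 : ℝ):ℂ) * f (negCoord i0 x)) := by
    rw [Finset.mul_sum, ← Finset.sum_sub_distrib, Finset.sum_eq_single i0]
    · simp only [negCoord_self, negCoord_invol]
      exact keyBexp k2 (ξ i0) (x i0) (hreg i0) (f (negCoord i0 x)) (f x)
    · intro i _ hi
      simp only [negCoord_ne ξ hi, negCoord_ne x hi, negCoord_comm i i0 x,
        negCoord_ne x (Ne.symm hi)]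
      ring
    · intro h; exact absurd (Finset.mem_univ i0) h
  -- the k₃-double-sum identity
  have hC3 : Complex.exp ((x i0 : ℝ):ℂ) *
        (∑ i : Fin n, ∑ j : Fin n, (if i < j then
            ((k3 * (negCoord i0 ξ i - negCoord i0 ξ j) : ℝ):ℂ)
              * (f (negCoord i0 x) - f (swapCoord i j (negCoord i0 x)))
              / (1 - Complex.exp (-((negCoord i0 x i - negCoord i0 x j : ℝ):ℂ)))
            + ((k3 * (negCoord i0 ξ i + negCoord i0 ξ j) : ℝ):ℂ)
              * (f (negCoord i0 x) - f (swapNegCoord i j (negCoord i0 x)))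
              / (1 - Complex.exp (-((negCoord i0 x i + negCoord i0 x j : ℝ):ℂ)))
          else 0))
      - ∑ i : Fin n, ∑ j : Fin n, (if i < j then
            ((k3 * (ξ i - ξ j) : ℝ):ℂ) *
              (Complex.exp ((x i0 : ℝ):ℂ) * f (negCoord i0 x)
                - Complex.exp ((swapCoord i j x i0 : ℝ):ℂ) * f (negCoord i0 (swapCoord i j x)))
              / (1 - Complex.exp (-((x i - x j : ℝ):ℂ)))
            + ((k3 * (ξ i + ξ j) : ℝ):ℂ) *
              (Complex.exp ((x i0 : ℝ):ℂ) * f (negCoord i0 x)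
                - Complex.exp ((swapNegCoord i j x i0 : ℝ):ℂ)
                    * f (negCoord i0 (swapNegCoord i j x)))
              / (1 - Complex.exp (-((x i + x j : ℝ):ℂ)))
          else 0)
      = -(2 * (k3:ℂ) * ((ξ i0 : ℝ):ℂ))
          * (Complex.exp ((x i0 : ℝ):ℂ) * f (negCoord i0 x)) * ((n:ℂ) - 1) := by
    simp only [Finset.mul_sum]
    rw [← Finset.sum_sub_distrib]
    simp only [← Finset.sum_sub_distrib]
    rw [Finset.sum_eq_single i0]
    · rw [← Finset.add_sum_erase _ _ (Finset.mem_univ i0)]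
      simp only [lt_self_iff_false, if_false, mul_zero, sub_zero, zero_add]
      refine (Finset.sum_eq_card_nsmul (b := -(2 * (k3:ℂ) * ((ξ i0 : ℝ):ℂ))
          * (Complex.exp ((x i0 : ℝ):ℂ) * f (negCoord i0 x))) ?_).trans ?_
      · intro j hj
        have hj' : j ≠ i0 := (Finset.mem_erase.mp hj).1
        have hlt := hi0lt j hj'
        rw [if_pos hlt, if_pos hlt]
        simp only [negCoord_self, negCoord_ne ξ hj', negCoord_ne x hj',
          swapCoord_negCoord hj', swapNegCoord_negCoord hj',
          swapCoord_fst, swapNegCoord_fst]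
        exact keyCexp k3 (ξ i0) (ξ j) (x i0) (x j) (hpairs i0 j hlt).1 (hpairs i0 j hlt).2
          (f (negCoord i0 x)) (f (negCoord i0 (swapNegCoord i0 j x)))
          (f (negCoord i0 (swapCoord i0 j x)))
      · rw [Finset.card_erase_of_mem (Finset.mem_univ i0), Finset.card_univ,
          Fintype.card_fin, nsmul_eq_mul, Nat.cast_sub hn, Nat.cast_one]
        ring
    · intro i _ hi
      refine Finset.sum_eq_zero (fun j _ => ?_)
      by_cases hij : i < j
      · have hji0 : j ≠ i0 := by
          intro h; subst h; exact hnlt i hij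
        rw [if_pos hij, if_pos hij]
        rw [negCoord_ne ξ hi, negCoord_ne ξ hji0, negCoord_ne x hi, negCoord_ne x hji0,
          swapCoord_negCoord_comm hi hji0, swapNegCoord_negCoord_comm hi hji0,
          swapCoord_ne x (Ne.symm hi) (Ne.symm hji0),
          swapNegCoord_ne x (Ne.symm hi) (Ne.symm hji0)]
        ring
      · simp [hij]
    · intro h; exact absurd (Finset.mem_univ i0) h
  simp only [cherednikBC]
  rw [fderiv_g i0 f hf x ξ]
  linear_combination hC1 + hC2 + hC3
    - (Complex.exp ((x i0 : ℝ):ℂ) * f (negCoord i0 x)) * hrhoC
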